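/- Let f_n(s) = Σ_{k=0}^{⌊(n-1)/2⌋} [n-1-k choose k]_{1/q} q^{-binom(k+1,2)} s^k (coefficients in the field of rational functions in q). Then for all n ≥ 2, f_n(qs) = f_{n-1}(s) + s·f_{n-2}(s). -/
import Mathlib


open Finset

/-- The indeterminate `q`, as an element of the field of rational functions over `ℚ`. -/
noncomputable def q : RatFunc ℚ := RatFunc.X

/-- The Gaussian (q-)binomial coefficient `[n choose k]_t` with base `t`,
defined as `(1-t^(n-k+1))⋯(1-t^n) / ((1-t)⋯(1-t^k))` for `0 ≤ k ≤ n` and `0` otherwise. -/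
noncomputable def qb (t : RatFunc ℚ) (n k : ℤ) : RatFunc ℚ :=
  if 0 ≤ k ∧ k ≤ n then
    (∏ i ∈ Finset.range k.toNat, (1 - t ^ (n - (i : ℤ)))) /
      (∏ i ∈ Finset.range k.toNat, (1 - t ^ ((i : ℤ) + 1)))
  else 0

/-- `f_n(s) = Σ_{k=0}^{⌊(n-1)/2⌋} [n-1-k choose k]_{1/q} q^(-binom(k+1,2)) s^k`
(terms with `2k > n-1` vanish since the q-binomial coefficient is `0` there). -/
noncomputable def f (n : ℕ) (s : RatFunc ℚ) : RatFunc ℚ :=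
  ∑ k ∈ Finset.range n,
    qb q⁻¹ ((n : ℤ) - 1 - k) k * q ^ (-((k : ℤ) * (k + 1) / 2)) * s ^ k

lemma q_ne : q ≠ 0 := by simpa [q] using RatFunc.X_ne_zero

lemma hfac (i : ℕ) : (1 : RatFunc ℚ) - q⁻¹ ^ ((i : ℤ) + 1) ≠ 0 := by
  have hpow : q⁻¹ ^ ((i : ℤ) + 1) = (q ^ (i + 1))⁻¹ := by
    rw [inv_zpow, ← zpow_natCast q (i + 1)]; push_cast; ring_nf
  rw [hpow]
  intro h
  have h1 : (q ^ (i + 1))⁻¹ = 1 := by linear_combination -h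
  have h2 : q ^ (i + 1) = 1 := by rw [← inv_inv (q ^ (i+1)), h1]; simp
  have h3 : (Polynomial.X : Polynomial ℚ) ^ (i + 1) = 1 := by
    apply RatFunc.algebraMap_injective ℚ
    simpa [q, RatFunc.algebraMap_X, map_pow] using h2
  have := congrArg Polynomial.natDegree h3
  simp [Polynomial.natDegree_X_pow] at this

lemma hden (K : ℕ) : (∏ i ∈ Finset.range K, ((1 : RatFunc ℚ) - q⁻¹ ^ ((i : ℤ) + 1))) ≠ 0 :=
  Finset.prod_ne_zero_iff.2 fun i _ => hfac i

lemma qb_diag (a : ℤ) (ha : 0 ≤ a) : qb q⁻¹ a a = 1 := by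
  obtain ⟨N, rfl⟩ : ∃ N : ℕ, a = N := ⟨a.toNat, by omega⟩
  rw [qb, if_pos ⟨by omega, le_refl _⟩]
  rw [div_eq_one_iff_eq (hden _)]
  have ht : ((N : ℤ)).toNat = N := by omega
  rw [ht, ← Finset.prod_range_reflect (fun j => (1 : RatFunc ℚ) - q⁻¹ ^ ((j : ℤ) + 1)) N]
  apply Finset.prod_congr rfl
  intro i hi
  rw [Finset.mem_range] at hi
  have he : ((N : ℤ)) - i = ((N - 1 - i : ℕ) : ℤ) + 1 := by omega
  rw [he]

lemma qb_pascal (m k : ℤ) (h : 0 < m ∨ k ≠ 0) :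
    qb q⁻¹ m k = q ^ (-k) * qb q⁻¹ (m - 1) k + qb q⁻¹ (m - 1) (k - 1) := by
  by_cases hk0 : k < 0
  · rw [qb, qb, qb, if_neg (by omega), if_neg (by omega), if_neg (by omega)]; ring
  by_cases hk1 : k = 0
  · subst hk1
    have hm : 0 < m := by tauto
    rw [qb, qb, qb, if_pos ⟨le_refl 0, by omega⟩, if_pos ⟨le_refl 0, by omega⟩,
      if_neg (by omega)]
    simp
  by_cases hkm : k ≤ m
  swap
  · rw [qb, qb, qb, if_neg (by omega), if_neg (by omega), if_neg (by omega)]; ring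
  -- main case : 0 < k ≤ m
  by_cases hdg : k = m
  · subst hdg
    rw [qb_diag k (by omega), qb_diag (k-1) (by omega)]
    rw [qb, if_neg (by omega)]
    ring
  -- 0 < k < m
  obtain ⟨K, rfl⟩ : ∃ K : ℕ, k = (K : ℤ) + 1 := ⟨(k - 1).toNat, by omega⟩
  rw [qb, qb, qb, if_pos ⟨by omega, hkm⟩, if_pos ⟨by omega, by omega⟩,
    if_pos ⟨by omega, by omega⟩]
  have ht1 : ((K : ℤ) + 1).toNat = K + 1 := by omega
  have ht2 : ((K : ℤ) + 1 - 1).toNat = K := by omega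
  rw [ht1, ht2]
  set A := ∏ i ∈ Finset.range K, ((1 : RatFunc ℚ) - q⁻¹ ^ (m - 1 - (i : ℤ))) with hA
  set D := ∏ i ∈ Finset.range K, ((1 : RatFunc ℚ) - q⁻¹ ^ ((i : ℤ) + 1)) with hD
  have hNum : (∏ i ∈ Finset.range (K + 1), ((1 : RatFunc ℚ) - q⁻¹ ^ (m - (i : ℤ))))
      = (1 - q⁻¹ ^ m) * A := by
    rw [Finset.prod_range_succ']
    simp only [Nat.cast_zero, sub_zero]
    rw [mul_comm]
    congr 1
    apply Finset.prod_congr rfl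
    intro i _
    have he : m - ((i + 1 : ℕ) : ℤ) = m - 1 - (i : ℤ) := by push_cast; ring
    rw [he]
  have hNum2 : (∏ i ∈ Finset.range (K + 1), ((1 : RatFunc ℚ) - q⁻¹ ^ (m - 1 - (i : ℤ))))
      = A * (1 - q⁻¹ ^ (m - 1 - (K : ℤ))) := Finset.prod_range_succ _ K
  have hDen : (∏ i ∈ Finset.range (K + 1), ((1 : RatFunc ℚ) - q⁻¹ ^ ((i : ℤ) + 1)))
      = D * (1 - q⁻¹ ^ ((K : ℤ) + 1)) := Finset.prod_range_succ _ K
  rw [hNum, hNum2, hDen]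
  have hDne : D ≠ 0 := hden K
  have hcne : (1 : RatFunc ℚ) - q⁻¹ ^ ((K : ℤ) + 1) ≠ 0 := hfac K
  have key2 : q ^ (-((K : ℤ) + 1)) = q⁻¹ ^ ((K : ℤ) + 1) := by
    rw [zpow_neg, inv_zpow]
  have key : q⁻¹ ^ ((K : ℤ) + 1) * q⁻¹ ^ (m - 1 - (K : ℤ)) = q⁻¹ ^ m := by
    rw [← zpow_add₀ (inv_ne_zero q_ne)]
    congr 1
    ring
  have hsc : (1 : RatFunc ℚ) - q⁻¹ ^ m
      = q ^ (-((K : ℤ) + 1)) * (1 - q⁻¹ ^ (m - 1 - (K : ℤ))) + (1 - q⁻¹ ^ ((K : ℤ) + 1)) := by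
    rw [key2]
    linear_combination key
  rw [hsc, key2]
  set u := q⁻¹ ^ ((K : ℤ) + 1) with hu
  set x := q⁻¹ ^ (m - 1 - (K : ℤ)) with hx
  rw [← mul_div_assoc, div_add_div _ _ (mul_ne_zero hDne hcne) hDne, div_eq_div_iff (mul_ne_zero hDne hcne)
    (mul_ne_zero (mul_ne_zero hDne hcne) hDne)]
  ring

lemma qb_neg_right (m k : ℤ) (hk : k < 0) : qb q⁻¹ m k = 0 := by
  rw [qb, if_neg (by omega)]

lemma qb_neg_left (m k : ℤ) (hm : m < k) : qb q⁻¹ m k = 0 := by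
  rw [qb, if_neg (by omega)]

/-- Recurrence `f_n(qs) = f_{n-1}(s) + s f_{n-2}(s)` for `n ≥ 2`. -/
theorem stmt_6 (n : ℕ) (hn : 2 ≤ n) (s : RatFunc ℚ) :
    f n (q * s) = f (n - 1) s + s * f (n - 2) s := by
  obtain ⟨m, rfl⟩ : ∃ m, n = m + 2 := ⟨n - 2, by omega⟩
  have e1 : m + 2 - 1 = m + 1 := rfl
  have e2 : m + 2 - 2 = m := rfl
  rw [e1, e2]
  have step2 : f (m + 1) s = ∑ k ∈ Finset.range (m + 2),
      qb q⁻¹ ((m : ℤ) - k) k * q ^ (-((k : ℤ) * (k + 1) / 2)) * s ^ k := by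
    rw [f]
    conv_rhs => rw [Finset.sum_range_succ]
    rw [qb_neg_left _ _ (by omega), zero_mul, zero_mul, add_zero]
    apply Finset.sum_congr rfl
    intro k _
    have : ((m + 1 : ℕ) : ℤ) - 1 - k = (m : ℤ) - k := by push_cast; ring
    rw [this]
  have step3 : s * f m s = ∑ k ∈ Finset.range (m + 2),
      qb q⁻¹ ((m : ℤ) - k) ((k : ℤ) - 1) * q ^ (-(((k : ℤ) - 1) * k / 2)) * s ^ k := by
    rw [f, Finset.mul_sum]
    conv_rhs => rw [Finset.sum_range_succ']
    rw [qb_neg_right _ _ (by omega), zero_mul, zero_mul, add_zero]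
    conv_rhs => rw [Finset.sum_range_succ]
    rw [qb_neg_left _ _ (by omega), zero_mul, zero_mul, add_zero]
    apply Finset.sum_congr rfl
    intro i _
    have h1 : (m : ℤ) - ((i + 1 : ℕ) : ℤ) = (m : ℤ) - 1 - i := by push_cast; ring
    have h2 : ((i + 1 : ℕ) : ℤ) - 1 = (i : ℤ) := by push_cast; ring
    rw [h1, h2]
    push_cast
    ring
  rw [step2, step3, ← Finset.sum_add_distrib, f]
  apply Finset.sum_congr rfl
  intro k _
  have hcast : ((m + 2 : ℕ) : ℤ) - 1 - k = ((m : ℤ) - k) + 1 := by push_cast; ring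
  rw [hcast, qb_pascal (((m : ℤ) - k) + 1) k (by omega)]
  have hm1 : (m : ℤ) - k + 1 - 1 = (m : ℤ) - k := by ring
  rw [hm1, mul_pow]
  have hqk : q ^ (k : ℕ) = q ^ (k : ℤ) := (zpow_natCast q k).symm
  rw [hqk]
  set B := qb q⁻¹ ((m : ℤ) - k) k with hB
  set C := qb q⁻¹ ((m : ℤ) - k) ((k : ℤ) - 1) with hC
  have h1 : q ^ (-(k : ℤ)) * q ^ (-((k : ℤ) * (k + 1) / 2)) * q ^ (k : ℤ)
      = q ^ (-((k : ℤ) * (k + 1) / 2)) := by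
    rw [← zpow_add₀ q_ne, ← zpow_add₀ q_ne]
    congr 1
    ring
  have h2 : q ^ (-((k : ℤ) * (k + 1) / 2)) * q ^ (k : ℤ)
      = q ^ (-(((k : ℤ) - 1) * k / 2)) := by
    rw [← zpow_add₀ q_ne]
    congr 1
    have hdiv : (k : ℤ) * (k + 1) = ((k : ℤ) - 1) * k + 2 * k := by ring
    omega
  calc (q ^ (-(k : ℤ)) * B + C) * q ^ (-((k : ℤ) * (k + 1) / 2)) * (q ^ (k : ℤ) * s ^ k)
      = B * (q ^ (-(k : ℤ)) * q ^ (-((k : ℤ) * (k + 1) / 2)) * q ^ (k : ℤ)) * s ^ k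
        + C * (q ^ (-((k : ℤ) * (k + 1) / 2)) * q ^ (k : ℤ)) * s ^ k := by ring
    _ = B * q ^ (-((k : ℤ) * (k + 1) / 2)) * s ^ k
        + C * q ^ (-(((k : ℤ) - 1) * k / 2)) * s ^ k := by rw [h1, h2]
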